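/- arXiv:2512.12153 — 4 statements merged into one kernel-verified Lean document; each statement's English description precedes it below -/
import Mathlib

section
/- Let F ⊆ G ⊆ D be subspaces of a finite-dimensional E-vector space D, with a := dim F ≥ 1. Then the image of the canonical map (∧^{a−1}F) ⊗ G → ∧^a D (sending x ⊗ g to x ∧ g) has dimension 1 + a·(dim G − a). -/
/-!
Extend a basis `f₀, …, fₙ` of `F` (so `a = n + 1`) by a basis `c₀, …, c_{m-1}` of a complement of
`F` in `G`. Then `ι(F)^n · ι(G) = ι(F)^(n+1) + ι(F)^n · ι(C)`. Since `ι(F)^(n+1)` is the line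
through `f₀ ∧ ⋯ ∧ fₙ` and `ι(F)^n` is spanned by the `n + 1` wedges omitting one `fᵢ`, the product
is spanned by `f₀ ∧ ⋯ ∧ fₙ` and the `(n + 1) m` wedges `(f₀ ∧ ⋯ ∧ f̂ᵢ ∧ ⋯ ∧ fₙ) ∧ c_j`. Up to sign
these are distinct members of the standard basis of `⋀ G` built from the `f`'s and `c`'s, so
they are linearly independent and the dimension is `1 + a m`.
-/

open ExteriorAlgebra Pointwise Set Submodule Function

theorem Submodule.exists_linearIndependent_span_range_eq {K V : Type*} [Field K] [AddCommGroup V]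
    [Module K V] (N : Submodule K V) [FiniteDimensional K N] {k : ℕ}
    (hk : Module.finrank K N = k) :
    ∃ f : Fin k → V, LinearIndependent K f ∧ span K (range f) = N := by
  subst hk
  let b := Module.finBasis K N
  refine ⟨N.subtype ∘ b, b.linearIndependent.map' _ N.ker_subtype, ?_⟩
  rw [range_comp, ← map_span, b.span_eq, map_top, range_subtype]

/-- `exchangeTuple n m none` indexes `f₀, …, fₙ`, and `exchangeTuple n m (some (i, j))` indexes
`f₀, …, fₙ` with `fᵢ` removed and `c_j` appended, for a family `Sum.elim f c`. -/
def exchangeTuple (n m : ℕ) : Option (Fin (n + 1) × Fin m) → Fin (n + 1) → Fin (n + 1) ⊕ Fin m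
  | none => Sum.inl
  | some (i, j) => Fin.snoc (Sum.inl ∘ i.succAbove) (Sum.inr j)

theorem exchangeTuple_injective {n m : ℕ} (x : Option (Fin (n + 1) × Fin m)) :
    Injective (exchangeTuple n m x) := by
  rcases x with _ | ⟨i, j⟩
  · exact Sum.inl_injective
  · refine Fin.snoc_injective_of_injective
      (Sum.inl_injective.comp Fin.succAbove_right_injective) ?_
    rintro ⟨_, h⟩
    exact Sum.inl_ne_inr h

theorem range_exchangeTuple_injective {n m : ℕ} :
    Injective fun x => range (exchangeTuple n m x) := by
  rintro (_ | ⟨i, j⟩) (_ | ⟨i', j'⟩) h <;>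
    simp only [exchangeTuple, Fin.range_snoc, range_comp, Fin.range_succAbove, Set.ext_iff] at h
  · rfl
  · simpa using h (Sum.inl i')
  · simpa using h (Sum.inl i)
  · have hi := h (Sum.inl i)
    have hj := h (Sum.inr j)
    simp only [mem_insert_iff, reduceCtorEq, mem_image, mem_compl_iff, mem_singleton_iff,
      Sum.inl.injEq, not_and_self, exists_const, or_self, exists_eq_right, false_or, false_iff,
      Decidable.not_not, and_false, or_false, Sum.inr.injEq, true_iff] at hi hj
    rw [hi, hj]

namespace ExteriorAlgebra

section CommRing

variable {R M J : Type*} [CommRing R] [AddCommGroup M] [Module R M] {k : ℕ}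

theorem ιMulti_snoc (p : Fin k → M) (q : M) :
    ιMulti R (k + 1) (Fin.snoc p q) = ιMulti R k p * ι R q := by
  rw [ιMulti_apply, List.ofFn_succ', List.concat_eq_append, List.prod_append, ιMulti_apply]
  simp

theorem pow_map_ι_span_range (f : J → M) (k : ℕ) :
    Submodule.map (ι R) (span R (range f)) ^ k =
      span R (range fun p : Fin k → J => ιMulti R k (f ∘ p)) := by
  rw [map_span, ← range_comp, span_pow]
  congr 1
  ext z
  rw [Set.mem_pow]
  constructor
  · rintro ⟨g, rfl⟩
    choose p hp using fun i => (g i).2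
    exact ⟨p, by simp only [ιMulti_apply, comp_apply, ← hp]⟩
  · rintro ⟨p, rfl⟩
    exact ⟨fun i => ⟨ι R (f (p i)), p i, rfl⟩, (ιMulti_apply _).symm⟩

theorem exists_ιMulti_comp_eq_units_smul (f : J → M) {p h : Fin k → J} (hp : Injective p)
    (hph : range p ⊆ range h) : ∃ u : ℤˣ, ιMulti R k (f ∘ p) = u • ιMulti R k (f ∘ h) := by
  obtain ⟨σ, rfl⟩ := range_subset_range_iff_exists_comp.mp hph
  have hσ : Bijective σ := Finite.injective_iff_bijective.mp hp.of_comp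
  exact ⟨Equiv.Perm.sign (.ofBijective σ hσ), (ιMulti R k).map_perm (f ∘ h) (.ofBijective σ hσ)⟩

theorem ιMulti_comp_mem_span_singleton (f : J → M) {p h : Fin k → J}
    (hph : range p ⊆ range h) : ιMulti R k (f ∘ p) ∈ span R {ιMulti R k (f ∘ h)} := by
  by_cases hp : Injective p
  · obtain ⟨u, hu⟩ := exists_ιMulti_comp_eq_units_smul (R := R) f hp hph
    rw [hu, Units.smul_def]
    exact Submodule.smul_of_tower_mem _ _ (mem_span_singleton_self _)
  · rw [ιMulti_eq_zero_of_not_inj fun h => hp h.of_comp]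
    exact zero_mem _

theorem pow_map_ι_span_range_eq_span_singleton (f : Fin k → M) :
    Submodule.map (ι R) (span R (range f)) ^ k = span R {ιMulti R k f} := by
  rw [pow_map_ι_span_range]
  refine le_antisymm (span_le.mpr ?_) (span_le.mpr ?_)
  · rintro _ ⟨p, rfl⟩
    exact ιMulti_comp_mem_span_singleton (h := id) f (by simp)
  · rw [singleton_subset_iff]
    exact subset_span ⟨id, rfl⟩

theorem pow_map_ι_span_range_eq_span_succAbove {n : ℕ} (f : Fin (n + 1) → M) :
    Submodule.map (ι R) (span R (range f)) ^ n =
      span R (range fun i : Fin (n + 1) => ιMulti R n (f ∘ i.succAbove)) := by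
  rw [pow_map_ι_span_range]
  refine le_antisymm (span_le.mpr ?_) (span_mono ?_)
  · rintro _ ⟨p, rfl⟩
    obtain ⟨i, hi⟩ : ∃ i, i ∉ range p := by
      by_contra! h
      simpa using Fintype.card_le_of_surjective p h
    refine span_mono (singleton_subset_iff.mpr (mem_range_self i))
      (ιMulti_comp_mem_span_singleton f ?_)
    rw [Fin.range_succAbove]
    rintro _ ⟨l, rfl⟩ rfl
    exact hi ⟨l, rfl⟩
  · rintro _ ⟨i, rfl⟩
    exact ⟨i.succAbove, rfl⟩

theorem pow_map_ι_mul_map_ι_sup {n m : ℕ} (f : Fin (n + 1) → M) (c : Fin m → M) :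
    Submodule.map (ι R) (span R (range f)) ^ n *
        Submodule.map (ι R) (span R (range f) ⊔ span R (range c)) =
      span R (range fun x => ιMulti R (n + 1) (Sum.elim f c ∘ exchangeTuple n m x)) := by
  rw [Submodule.map_sup, Submodule.mul_sup, ← pow_succ, pow_map_ι_span_range_eq_span_singleton,
    pow_map_ι_span_range_eq_span_succAbove, map_span, ← range_comp, span_mul_span,
    ← image2_mul, image2_range, Option.range_eq, span_insert]
  congr 3
  funext ⟨i, j⟩
  simp only [comp_apply, exchangeTuple, Fin.comp_snoc, ιMulti_snoc]
  rfl

end CommRing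

theorem linearIndependent_ιMulti_comp {K M J X : Type*} [Field K] [AddCommGroup M] [Module K M]
    {k : ℕ} {v : J → M} (hv : LinearIndependent K v) {g : X → Fin k → J}
    (hg : ∀ x, Injective (g x)) (hrange : Injective fun x => range (g x)) :
    LinearIndependent K fun x => ιMulti K k (v ∘ g x) := by
  classical
  -- Any order on `J` gives Mathlib's basis of `⋀ (span v)`; each `ιMulti (v ∘ g x)` is a signed
  -- member of it.
  let _ : LinearOrder J := linearOrderOfSTO WellOrderingRel
  let t : X → powersetCard J k := fun x =>
    ⟨Finset.univ.image (g x), by simp [Finset.card_image_of_injective _ (hg x)]⟩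
  have ht : Injective t := fun x y hxy => hrange <| by
    simpa [t, Subtype.ext_iff, ← Finset.coe_inj] using hxy
  have hbasis : LinearIndependent K fun x => ιMulti_family K k v (t x) := by
    rw [exteriorPower.ιMulti_family_eq_coe_comp]
    exact ((exteriorPower.ιMulti_family_linearIndependent_field k hv).map'
      _ (ker_subtype _)).comp t ht
  have hsub : ∀ x, range (g x) ⊆ range (powersetCard.ofFinEmbEquiv.symm (t x)) := by
    rintro x _ ⟨i, rfl⟩
    rw [powersetCard.mem_range_ofFinEmbEquiv_symm_iff_mem]
    simp [t]
  choose u hu using fun x => exists_ιMulti_comp_eq_units_smul (R := K) v (hg x) (hsub x)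
  convert hbasis.units_smul fun x => Units.map (Int.castRingHom K).toMonoidHom (u x) with x
  rw [hu, Units.smul_def, Pi.smul_apply', Units.smul_def, Units.coe_map]
  exact (Int.cast_smul_eq_zsmul K _ _).symm

end ExteriorAlgebra

/-- Let `F ⊆ G ⊆ D` be subspaces of a finite-dimensional `E`-vector space `D`,
with `a := dim F ≥ 1`.  Then the image of the canonical map `(⋀^{a-1} F) ⊗ G → ⋀^a D`
(sending `x ⊗ g` to `x ∧ g`) has dimension `1 + a (dim G - a)`.

The image is realized inside the exterior algebra of `D` as the submodule product
`ι(F)^{a-1} * ι(G)`. -/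
theorem statement4 {E : Type*} [Field E] {D : Type*} [AddCommGroup D] [Module E D]
    [FiniteDimensional E D] {a : ℕ}
    (F G : Submodule E D) (hFG : F ≤ G) (hF : Module.finrank E F = a) (ha : 1 ≤ a) :
    Module.finrank E
      ((Submodule.map (ExteriorAlgebra.ι E) F) ^ (a - 1) *
        (Submodule.map (ExteriorAlgebra.ι E) G)) =
      1 + a * (Module.finrank E G - a) := by
  obtain ⟨n, rfl⟩ : ∃ n, a = n + 1 := ⟨a - 1, by omega⟩
  obtain ⟨C, hFC, rfl⟩ := IsModularLattice.exists_disjoint_and_sup_eq hFG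
  obtain ⟨f, hf, rfl⟩ := F.exists_linearIndependent_span_range_eq hF
  obtain ⟨c, hc, hcC⟩ := C.exists_linearIndependent_span_range_eq rfl
  rw [← hcC] at hFC ⊢
  have hv : LinearIndependent E (Sum.elim f c) := hf.sum_type hc hFC
  have hG : span E (range f) ⊔ span E (range c) = span E (range (Sum.elim f c)) := by
    rw [Sum.elim_range, span_union]
  rw [Nat.add_sub_cancel, pow_map_ι_mul_map_ι_sup,
    finrank_span_eq_card (linearIndependent_ιMulti_comp hv exchangeTuple_injective
      range_exchangeTuple_injective),
    hG, finrank_span_eq_card hv]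
  simp only [Fintype.card_option, Fintype.card_prod, Fintype.card_sum, Fintype.card_fin]
  rw [Nat.add_sub_cancel_left]
  ring
end

section
/- Every endomorphism f of D satisfying f(F_j) ⊆ F_j for all 0 ≤ j ≤ n−1 can be written as a sum f = f_0 + f_1 + ⋯ + f_{n−1} where, for each j, f_j ∈ Hom_E(D, F_j) and f_j restricted to F_j is multiplication by a scalar. -/
/-- The `E`-subspace of `End_E(D)` of endomorphisms `f` with image contained in `F` whose
restriction to `F` is multiplication by a scalar. -/
def scalarOn {E : Type*} [Field E] {D : Type*} [AddCommGroup D] [Module E D]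
    (F : Submodule E D) : Submodule E (D →ₗ[E] D) where
  carrier := {f | (∀ x : D, f x ∈ F) ∧ ∃ c : E, ∀ v ∈ F, f v = c • v}
  add_mem' := by
    rintro f g ⟨hf1, cf, hf2⟩ ⟨hg1, cg, hg2⟩
    refine ⟨fun x => F.add_mem (hf1 x) (hg1 x), cf + cg, fun v hv => ?_⟩
    simp [hf2 v hv, hg2 v hv, add_smul]
  zero_mem' := ⟨fun x => F.zero_mem, 0, fun v _ => by simp⟩
  smul_mem' := by
    rintro c f ⟨hf1, cf, hf2⟩
    refine ⟨fun x => F.smul_mem c (hf1 x), c * cf, fun v hv => ?_⟩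
    simp [hf2 v hv, mul_smul]

open Module

theorem scalar_of_finrank_one {E V : Type*} [Field E] [AddCommGroup V] [Module E V]
    (h : finrank E V = 1) (φ : V →ₗ[E] V) : ∃ c : E, ∀ x, φ x = c • x := by
  let b := Module.basisUnique (Fin 1) h
  have key : ∀ y : V, y = b.repr y 0 • b 0 := by
    intro y
    conv_lhs => rw [← b.sum_repr y]
    simp
  obtain ⟨c, hb⟩ : ∃ c, φ (b 0) = c • b 0 := ⟨_, key _⟩
  refine ⟨c, fun x => ?_⟩
  conv_lhs => rw [key x]
  rw [map_smul, hb, smul_smul, mul_comm, ← smul_smul, ← key x]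


theorem mem_scalarOn_iff {E : Type*} [Field E] {D : Type*} [AddCommGroup D] [Module E D]
    {F : Submodule E D} {f : D →ₗ[E] D} :
    f ∈ scalarOn F ↔ (∀ x : D, f x ∈ F) ∧ ∃ c : E, ∀ v ∈ F, f v = c • v := Iff.rfl

universe u v

theorem aux {E : Type u} [Field E] (n : ℕ) :
    ∀ (D : Type v) [AddCommGroup D] [Module E D] [FiniteDimensional E D],
    Module.finrank E D = n →
    ∀ (F : ℕ → Submodule E D),
    (∀ j : ℕ, F (j + 1) ≤ F j) →
    (∀ j : ℕ, j ≤ n → Module.finrank E (F j) = n - j) →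
    ∀ (f : D →ₗ[E] D), (∀ j : ℕ, j ≤ n - 1 → ∀ x ∈ F j, f x ∈ F j) →
    ∃ g : Fin n → (D →ₗ[E] D),
      (∀ j : Fin n, g j ∈ scalarOn (F j)) ∧ f = ∑ j : Fin n, g j := by
  induction n with
  | zero =>
    intro D _ _ _ hD F hflag hdim f hf
    have : Subsingleton D := Module.finrank_zero_iff.mp hD
    refine ⟨Fin.elim0, fun j => j.elim0, ?_⟩
    ext x
    exact Subsingleton.elim _ _
  | succ n ih =>
    intro D _ _ _ hD F hflag hdim f hf
    -- antitone flag
    have Fanti : ∀ i j : ℕ, i ≤ j → F j ≤ F i := fun i j h =>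
      (antitone_nat_of_succ_le hflag) h
    have hF0 : F 0 = ⊤ := Submodule.eq_top_of_finrank_eq (by rw [hdim 0 (Nat.zero_le _), hD]; omega)
    have hdF1 : finrank E (F 1) = n := by rw [hdim 1 (by omega)]; omega
    -- f preserves F 1
    have hF1 : ∀ x ∈ F 1, f x ∈ F 1 := by
      rcases Nat.eq_zero_or_pos n with h0 | hpos
      · have : F 1 = ⊥ := by
          rw [← Submodule.finrank_eq_zero (R := E)]
          omega
        intro x hx
        rw [this] at hx ⊢
        simp only [Submodule.mem_bot] at hx ⊢
        rw [hx, map_zero]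
      · exact hf 1 (by omega)
    -- the scalar on the quotient
    have hQ : finrank E (D ⧸ F 1) = 1 := by
      have := Submodule.finrank_quotient_add_finrank (F 1)
      omega
    obtain ⟨c, hc⟩ := scalar_of_finrank_one hQ
      (Submodule.mapQ (F 1) (F 1) f (fun x hx => hF1 x hx))
    have hcmem : ∀ x : D, f x - c • x ∈ F 1 := by
      intro x
      have h1 : Submodule.Quotient.mk (p := F 1) (f x) =
          Submodule.mapQ (F 1) (F 1) f (fun x hx => hF1 x hx) (Submodule.Quotient.mk x) := by
        rw [Submodule.mapQ_apply]
      rw [hc] at h1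
      have : Submodule.Quotient.mk (p := F 1) (f x - c • x) = 0 := by
        rw [Submodule.Quotient.mk_sub, h1, Submodule.Quotient.mk_smul]
        simp
      exact (Submodule.Quotient.mk_eq_zero _).mp this
    rcases Nat.eq_zero_or_pos n with h0 | hpos
    · -- dimension 1: f itself is scalar
      subst h0
      have hbot : F 1 = ⊥ := by
        rw [← Submodule.finrank_eq_zero (R := E)]
        omega
      have hsc : ∀ x : D, f x = c • x := by
        intro x
        have := hcmem x
        rw [hbot, Submodule.mem_bot, sub_eq_zero] at this
        exact this
      refine ⟨fun _ => f, fun j => ?_, ?_⟩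
      · refine ⟨fun x => ?_, c, fun v _ => hsc v⟩
        have : (j : ℕ) = 0 := by omega
        rw [this, hF0]
        trivial
      · simp
    · -- inductive case, n ≥ 1
      haveI : NeZero n := ⟨by omega⟩
      -- projection onto F 1
      obtain ⟨W, hW⟩ := Submodule.exists_isCompl (F 1)
      set π := (F 1).linearProjOfIsCompl W hW with hπ
      have hπ_left : ∀ (v : D) (hv : v ∈ F 1), π v = ⟨v, hv⟩ := by
        intro v hv
        exact Submodule.linearProjOfIsCompl_apply_left hW ⟨v, hv⟩
      -- restricted map
      set fr : F 1 →ₗ[E] F 1 := f.restrict hF1 with hfr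
      -- flag on F 1
      set G : ℕ → Submodule E (F 1) := fun j => (F (j + 1)).comap (F 1).subtype with hG
      have hGflag : ∀ j : ℕ, G (j + 1) ≤ G j := fun j => Submodule.comap_mono (hflag (j + 1))
      have hGdim : ∀ j : ℕ, j ≤ n → finrank E (G j) = n - j := by
        intro j hj
        have hle : F (j + 1) ≤ F 1 := Fanti 1 (j + 1) (by omega)
        have := (Submodule.comapSubtypeEquivOfLe hle).finrank_eq
        rw [hG]
        rw [this, hdim (j + 1) (by omega)]
        omega
      have hGf : ∀ j : ℕ, j ≤ n - 1 → ∀ x ∈ G j, fr x ∈ G j := by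
        intro j hj x hx
        simp only [hG, Submodule.mem_comap, Submodule.coe_subtype] at hx ⊢
        rw [hfr, LinearMap.restrict_apply]
        by_cases hjn : j + 1 ≤ n
        · exact hf (j + 1) (by omega) _ hx
        · have : j = 0 := by omega
          subst this
          exact hF1 _ hx
      obtain ⟨g, hgmem, hgsum⟩ := ih (F 1) hdF1 G hGflag hGdim fr hGf
      -- error term
      set r : D →ₗ[E] D := (f - c • LinearMap.id) - (F 1).subtype ∘ₗ fr ∘ₗ π with hr
      have hrmem : r ∈ scalarOn (F 1) := by
        constructor
        · intro x
          simp only [hr, LinearMap.sub_apply, LinearMap.smul_apply, LinearMap.id_apply,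
            LinearMap.comp_apply, Submodule.coe_subtype]
          exact Submodule.sub_mem _ (hcmem x) (Submodule.coe_mem _)
        · refine ⟨-c, fun v hv => ?_⟩
          simp only [hr, LinearMap.sub_apply, LinearMap.smul_apply, LinearMap.id_apply,
            LinearMap.comp_apply, Submodule.coe_subtype]
          rw [hπ_left v hv, hfr, LinearMap.restrict_apply]
          simp only [neg_smul]
          abel
      -- assemble
      set A : Fin n → (D →ₗ[E] D) :=
        fun j => (F 1).subtype ∘ₗ g j ∘ₗ π + if j = 0 then r else 0 with hA
      refine ⟨Fin.cons (c • LinearMap.id) A, ?_, ?_⟩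
      · intro j
        refine Fin.cases ?_ ?_ j
        · -- index 0
          refine ⟨fun x => ?_, c, fun v _ => rfl⟩
          simp only [Fin.cons_zero, Fin.val_zero, hF0]
          trivial
        · -- index k+1
          intro k
          simp only [Fin.cons_succ, Fin.val_succ, hA]
          have hmain : (F 1).subtype ∘ₗ g k ∘ₗ π ∈ scalarOn (F ((k : ℕ) + 1)) := by
            obtain ⟨hg1, cg, hg2⟩ := hgmem k
            constructor
            · intro x
              have := hg1 (π x)
              simp only [hG, Submodule.mem_comap, Submodule.coe_subtype] at this
              simpa using this
            · refine ⟨cg, fun v hv => ?_⟩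
              have hv1 : v ∈ F 1 := Fanti 1 ((k : ℕ) + 1) (by omega) hv
              simp only [LinearMap.comp_apply, Submodule.coe_subtype]
              rw [hπ_left v hv1]
              have hmem : (⟨v, hv1⟩ : F 1) ∈ G (k : ℕ) := by
                simp only [hG, Submodule.mem_comap, Submodule.coe_subtype]
                exact hv
              rw [hg2 _ hmem]
              rfl
          by_cases hk : k = 0
          · subst hk
            simp only [if_pos rfl, Fin.val_zero]
            exact Submodule.add_mem _ hmain hrmem
          · simp only [if_neg hk]
            simpa using Submodule.add_mem _ hmain (Submodule.zero_mem (scalarOn (F ((k : ℕ) + 1))))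
      · -- the sum
        rw [Fin.sum_cons]
        have hNZ : (0 : Fin n) ∈ Finset.univ := Finset.mem_univ _
        have hsplit : ∑ j : Fin n, A j
            = (∑ j : Fin n, (F 1).subtype ∘ₗ g j ∘ₗ π) + r := by
          rw [hA]
          rw [Finset.sum_add_distrib]
          congr 1
          haveI : NeZero n := ⟨by omega⟩
          simp
        rw [hsplit]
        ext x
        simp only [LinearMap.add_apply, LinearMap.smul_apply, LinearMap.id_apply, hr,
          LinearMap.sub_apply, LinearMap.coe_sum, Finset.sum_apply, LinearMap.comp_apply,
          Submodule.coe_subtype]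
        have hsum : ∑ j : Fin n, ((g j (π x) : F 1) : D) = ((fr (π x) : F 1) : D) := by
          rw [hgsum]
          simp
        rw [hsum]
        abel

/-- Let `D = F_0 ⊋ F_1 ⊋ ⋯ ⊋ F_{n-1} ⊋ F_n = 0` be a complete flag on the
`n`-dimensional `E`-vector space `D` (so `dim F_j = n - j`).  Every endomorphism `f` of `D`
satisfying `f(F_j) ⊆ F_j` for all `0 ≤ j ≤ n-1` can be written as a sum
`f = f_0 + f_1 + ⋯ + f_{n-1}` where, for each `j`, `f_j ∈ Hom_E(D, F_j)` and `f_j` restricted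
to `F_j` is multiplication by a scalar. -/
theorem statement5 {E : Type*} [Field E] {D : Type*} [AddCommGroup D] [Module E D]
    {n : ℕ} [FiniteDimensional E D] (hD : Module.finrank E D = n)
    (F : ℕ → Submodule E D)
    (hflag : ∀ j : ℕ, F (j + 1) ≤ F j)
    (hdim : ∀ j : ℕ, j ≤ n → Module.finrank E (F j) = n - j)
    (f : D →ₗ[E] D) (hf : ∀ j : ℕ, j ≤ n - 1 → ∀ x ∈ F j, f x ∈ F j) :
    ∃ g : Fin n → (D →ₗ[E] D),
      (∀ j : Fin n, g j ∈ scalarOn (F j)) ∧ f = ∑ j : Fin n, g j := by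
  exact aux n D hD F hflag hdim f hf
end

section
/- Let w ∈ S_n and 1 ≤ i ≤ n−1, and suppose that some reduced word for w contains the letter s_i exactly once. Then there exists w' in the subgroup generated by {s_j : j ≠ i} such that w'w equals one of the following multiplicity-free elements: s_i; or s_i s_{i−1}⋯s_{i−δ} for some δ ≥ 1; or s_i s_{i+1}⋯s_{i+δ} for some δ ≥ 1; or s_i s_{i−1}⋯s_{i−δ⁻} s_{i+1}⋯s_{i+δ⁺} for some δ⁻, δ⁺ ≥ 1. -/
/-- The simple transposition `s_j = (j, j+1)` of `S_n` (here `n = m + 1` and the simple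
transpositions are indexed 0-based by `j ∈ {0, …, m-1}`; out-of-range indices give `1`). -/
def simpleT (m : ℕ) (j : ℕ) : Equiv.Perm (Fin (m + 1)) :=
  if h : j < m then Equiv.swap ⟨j, by omega⟩ ⟨j + 1, by omega⟩ else 1

/-- The product of the word `l` (a list of 0-based indices of simple transpositions). -/
def wordProd (m : ℕ) (l : List ℕ) : Equiv.Perm (Fin (m + 1)) :=
  (l.map (simpleT m)).prod

/-- `l` is a reduced word for `w`: it is a word in the simple transpositions whose product is
`w`, of minimal length among all such words. -/
def IsReducedWord (m : ℕ) (w : Equiv.Perm (Fin (m + 1))) (l : List ℕ) : Prop :=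
  (∀ j ∈ l, j < m) ∧ wordProd m l = w ∧
    ∀ l' : List ℕ, (∀ j ∈ l', j < m) → wordProd m l' = w → l.length ≤ l'.length

/-- The set of simple transpositions `s_j` with `j ≠ i`. -/
def simplesAvoiding (m : ℕ) (i : ℕ) : Set (Equiv.Perm (Fin (m + 1))) :=
  {g | ∃ j : ℕ, j < m ∧ j ≠ i ∧ g = simpleT m j}

/-!
Let `H` be the subgroup generated by the `s_j`, `j ≠ i`, and `C` the set of the elements
`c(δ₁, δ₂) = s_i s_{i-1} ⋯ s_{i-δ₁} s_{i+1} ⋯ s_{i+δ₂}`. Writing the given word as `a s_i b` with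
`a` and `b` free of `s_i`, it suffices to show that `s_i b ∈ H C`. As `s_i = c(0, 0)`, this
follows once `H C` is stable under right multiplication by every `s_j`, `j ≠ i`. Now
`c(δ₁, δ₂)` is the cycle `i - δ₁ ↦ i + 1 ↦ ⋯ ↦ i + δ₂ + 1 ↦ i ↦ i - 1 ↦ ⋯ ↦ i - δ₁`, and
`c s_j = (c(j) c(j+1)) c`; so `c(δ₁, δ₂) s_j` is `s_{j'} c(δ₁, δ₂)` with `j' ≠ i` when `c` maps
`j, j + 1` to consecutive points, and otherwise it is `c(δ₁ ± 1, δ₂)` or `c(δ₁, δ₂ ± 1)`.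
-/

open Equiv Pointwise

lemma exists_eq_append_cons_of_count_eq_one {α : Type*} [DecidableEq α] {l : List α} {a : α}
    (h : l.count a = 1) : ∃ l₁ l₂, l = l₁ ++ a :: l₂ ∧ a ∉ l₁ ∧ a ∉ l₂ := by
  obtain ⟨l₁, l₂, rfl⟩ := List.append_of_mem (List.count_pos_iff.1 (by omega : 0 < l.count a))
  rw [List.count_append, List.count_cons_self] at h
  exact ⟨l₁, l₂, rfl, List.count_eq_zero.1 (by omega), List.count_eq_zero.1 (by omega)⟩

section

variable {m : ℕ}

lemma wordProd_cons (j : ℕ) (l : List ℕ) :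
    wordProd m (j :: l) = simpleT m j * wordProd m l := by
  simp [wordProd]

lemma wordProd_append (l₁ l₂ : List ℕ) :
    wordProd m (l₁ ++ l₂) = wordProd m l₁ * wordProd m l₂ := by
  simp [wordProd]

lemma wordProd_singleton (j : ℕ) : wordProd m [j] = simpleT m j := by
  simp [wordProd]

lemma val_simpleT_apply {j : ℕ} (hj : j < m) (x : Fin (m + 1)) :
    (simpleT m j x : ℕ) =
      if (x : ℕ) = j then j + 1 else if (x : ℕ) = j + 1 then j else x := by
  simp only [simpleT, dif_pos hj, swap_apply_def]
  split_ifs <;> simp_all [Fin.ext_iff]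

lemma simpleT_mul_self (j : ℕ) : simpleT m j * simpleT m j = 1 := by
  unfold simpleT
  split_ifs <;> simp

lemma mul_simpleT_eq_simpleT_mul {g : Perm (Fin (m + 1))} {j k : ℕ} (hj : j < m) (hk : k < m)
    (h₀ : (g ⟨j, by omega⟩ : ℕ) = k) (h₁ : (g ⟨j + 1, by omega⟩ : ℕ) = k + 1) :
    g * simpleT m j = simpleT m k * g := by
  rw [simpleT, simpleT, dif_pos hj, dif_pos hk, mul_swap_eq_swap_mul]
  congr 2 <;> exact Fin.ext ‹_›

lemma simpleT_commute {j k : ℕ} (h : j + 1 < k) : Commute (simpleT m j) (simpleT m k) := by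
  by_cases hk : k < m
  · refine (mul_simpleT_eq_simpleT_mul (by omega) (by omega) ?_ ?_).symm <;>
      · rw [val_simpleT_apply hk]; split_ifs <;> simp_all <;> omega
  · simp [simpleT, hk]

lemma simpleT_commute_wordProd {j : ℕ} {l : List ℕ} (h : ∀ k ∈ l, j + 1 < k) :
    Commute (simpleT m j) (wordProd m l) :=
  Commute.list_prod_right _ _ <| List.forall_mem_map.2 fun k hk => simpleT_commute (h k hk)

lemma wordProd_mem_closure {i : ℕ} {l : List ℕ} (hl : ∀ j ∈ l, j < m ∧ j ≠ i) :
    wordProd m l ∈ Subgroup.closure (simplesAvoiding m i) :=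
  list_prod_mem <| List.forall_mem_map.2 fun j hj =>
    Subgroup.subset_closure ⟨j, (hl j hj).1, (hl j hj).2, rfl⟩

def descWord (i δ : ℕ) : List ℕ := (List.range δ).map (fun t => i - 1 - t)

def ascWord (i δ : ℕ) : List ℕ := (List.range δ).map (fun t => i + 1 + t)

lemma descWord_succ (i δ : ℕ) : descWord i (δ + 1) = descWord i δ ++ [i - 1 - δ] := by
  simp [descWord, List.range_succ]

lemma ascWord_succ (i δ : ℕ) : ascWord i (δ + 1) = ascWord i δ ++ [i + 1 + δ] := by
  simp [ascWord, List.range_succ]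

lemma val_wordProd_descWord_apply {i δ : ℕ} (hi : i < m) (hδ : δ ≤ i) (x : Fin (m + 1)) :
    (wordProd m (descWord i δ) x : ℕ) =
      if (x : ℕ) = i - δ then i
      else if i - δ < (x : ℕ) ∧ (x : ℕ) ≤ i then (x : ℕ) - 1 else x := by
  induction δ generalizing x with
  | zero =>
    simp only [descWord, List.range_zero, List.map_nil, wordProd]
    split_ifs <;> simp <;> omega
  | succ δ ih =>
    rw [descWord_succ, wordProd_append, Perm.mul_apply, ih (by omega), wordProd_singleton,
      val_simpleT_apply (by omega)]
    split_ifs <;> omega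

lemma val_wordProd_ascWord_apply {i δ : ℕ} (hδ : i + δ < m) (x : Fin (m + 1)) :
    (wordProd m (ascWord i δ) x : ℕ) =
      if i + 1 ≤ (x : ℕ) ∧ (x : ℕ) ≤ i + δ then (x : ℕ) + 1
      else if (x : ℕ) = i + δ + 1 then i + 1 else x := by
  induction δ generalizing x with
  | zero =>
    simp only [ascWord, List.range_zero, List.map_nil, wordProd]
    split_ifs <;> simp <;> omega
  | succ δ ih =>
    rw [ascWord_succ, wordProd_append, Perm.mul_apply, ih (by omega), wordProd_singleton,
      val_simpleT_apply (by omega)]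
    split_ifs <;> omega

def canonicalPerm (m i δ₁ δ₂ : ℕ) : Perm (Fin (m + 1)) :=
  wordProd m (i :: (descWord i δ₁ ++ ascWord i δ₂))

lemma canonicalPerm_zero_zero (i : ℕ) : canonicalPerm m i 0 0 = simpleT m i := by
  simp [canonicalPerm, descWord, ascWord, wordProd]

lemma canonicalPerm_succ_left {i δ₁ : ℕ} (δ₂ : ℕ) (h : δ₁ < i) :
    canonicalPerm m i (δ₁ + 1) δ₂ = canonicalPerm m i δ₁ δ₂ * simpleT m (i - 1 - δ₁) := by
  have hcomm : Commute (simpleT m (i - 1 - δ₁)) (wordProd m (ascWord i δ₂)) :=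
    simpleT_commute_wordProd fun k hk => by
      obtain ⟨t, -, rfl⟩ := List.mem_map.1 hk
      omega
  rw [canonicalPerm, canonicalPerm, descWord_succ, List.append_assoc, List.singleton_append,
    wordProd_cons, wordProd_cons, wordProd_append, wordProd_append, wordProd_cons, hcomm.eq]
  simp only [mul_assoc]

lemma canonicalPerm_succ_right (i δ₁ δ₂ : ℕ) :
    canonicalPerm m i δ₁ (δ₂ + 1) = canonicalPerm m i δ₁ δ₂ * simpleT m (i + 1 + δ₂) := by
  rw [canonicalPerm, canonicalPerm, ascWord_succ, ← List.append_assoc, ← List.cons_append,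
    wordProd_append, wordProd_singleton]

section bounds

variable {i δ₁ δ₂ : ℕ} (hi : i < m) (hδ₁ : δ₁ ≤ i) (hδ₂ : i + δ₂ < m)
include hi hδ₁ hδ₂

lemma val_canonicalPerm_apply (x : Fin (m + 1)) :
    (canonicalPerm m i δ₁ δ₂ x : ℕ) =
      if (x : ℕ) = i - δ₁ then i + 1
      else if i - δ₁ < (x : ℕ) ∧ (x : ℕ) ≤ i then (x : ℕ) - 1
      else if i + 1 ≤ (x : ℕ) ∧ (x : ℕ) ≤ i + δ₂ then (x : ℕ) + 1
      else if (x : ℕ) = i + δ₂ + 1 then i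
      else x := by
  rw [canonicalPerm, wordProd_cons, wordProd_append, Perm.mul_apply, Perm.mul_apply,
    val_simpleT_apply hi, val_wordProd_descWord_apply hi hδ₁, val_wordProd_ascWord_apply hδ₂]
  split_ifs <;> omega

lemma canonicalPerm_mul_simpleT_of_far {j : ℕ} (hj : j < m)
    (h : j + 1 < i - δ₁ ∨ i + δ₂ + 1 < j) :
    canonicalPerm m i δ₁ δ₂ * simpleT m j = simpleT m j * canonicalPerm m i δ₁ δ₂ := by
  apply mul_simpleT_eq_simpleT_mul hj hj <;>
    · simp only [val_canonicalPerm_apply hi hδ₁ hδ₂]; split_ifs <;> omega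

lemma canonicalPerm_mul_simpleT_of_left {j : ℕ} (h₁ : i - δ₁ < j) (h₂ : j < i) :
    canonicalPerm m i δ₁ δ₂ * simpleT m j = simpleT m (j - 1) * canonicalPerm m i δ₁ δ₂ := by
  apply mul_simpleT_eq_simpleT_mul (by omega) (by omega) <;>
    · simp only [val_canonicalPerm_apply hi hδ₁ hδ₂]; split_ifs <;> omega

lemma canonicalPerm_mul_simpleT_of_right {j : ℕ} (h₁ : i < j) (h₂ : j < i + δ₂) :
    canonicalPerm m i δ₁ δ₂ * simpleT m j = simpleT m (j + 1) * canonicalPerm m i δ₁ δ₂ := by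
  apply mul_simpleT_eq_simpleT_mul (by omega) (by omega) <;>
    · simp only [val_canonicalPerm_apply hi hδ₁ hδ₂]; split_ifs <;> omega

end bounds

lemma canonicalPerm_eq_or {i p q : ℕ} (hp : p ≤ i) (hq : i + q < m) :
    (canonicalPerm m i p q = simpleT m i) ∨
      (∃ δ : ℕ, 1 ≤ δ ∧ δ ≤ i ∧
        canonicalPerm m i p q = wordProd m (i :: (List.range δ).map (fun t => i - 1 - t))) ∨
      (∃ δ : ℕ, 1 ≤ δ ∧ i + δ < m ∧
        canonicalPerm m i p q = wordProd m (i :: (List.range δ).map (fun t => i + 1 + t))) ∨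
      (∃ δ₁ δ₂ : ℕ, 1 ≤ δ₁ ∧ 1 ≤ δ₂ ∧ δ₁ ≤ i ∧ i + δ₂ < m ∧
        canonicalPerm m i p q = wordProd m
          (i :: ((List.range δ₁).map (fun t => i - 1 - t) ++
                 (List.range δ₂).map (fun t => i + 1 + t)))) := by
  rcases Nat.eq_zero_or_pos p with rfl | hp₀ <;> rcases Nat.eq_zero_or_pos q with rfl | hq₀
  · exact Or.inl (canonicalPerm_zero_zero i)
  · exact Or.inr <| Or.inr <| Or.inl ⟨q, hq₀, hq, by simp [canonicalPerm, descWord, ascWord]⟩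
  · exact Or.inr <| Or.inl ⟨p, hp₀, hp, by simp [canonicalPerm, descWord, ascWord]⟩
  · exact Or.inr <| Or.inr <| Or.inr ⟨p, q, hp₀, hq₀, hp, hq, rfl⟩

def canonicalPerms (m i : ℕ) : Set (Perm (Fin (m + 1))) :=
  {c | ∃ δ₁ δ₂, δ₁ ≤ i ∧ i + δ₂ < m ∧ c = canonicalPerm m i δ₁ δ₂}

def canonicalCosets (m i : ℕ) : Set (Perm (Fin (m + 1))) :=
  (Subgroup.closure (simplesAvoiding m i) : Set (Perm (Fin (m + 1)))) * canonicalPerms m i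

lemma canonicalPerm_mem_canonicalCosets {i δ₁ δ₂ : ℕ} (hδ₁ : δ₁ ≤ i) (hδ₂ : i + δ₂ < m) :
    canonicalPerm m i δ₁ δ₂ ∈ canonicalCosets m i :=
  Set.mem_mul.2 ⟨1, one_mem _, _, ⟨_, _, hδ₁, hδ₂, rfl⟩, one_mul _⟩

lemma simpleT_mul_canonicalPerm_mem_canonicalCosets {i δ₁ δ₂ k : ℕ} (hδ₁ : δ₁ ≤ i)
    (hδ₂ : i + δ₂ < m) (hk : k < m) (hki : k ≠ i) :
    simpleT m k * canonicalPerm m i δ₁ δ₂ ∈ canonicalCosets m i :=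
  Set.mul_mem_mul (Subgroup.subset_closure ⟨_, hk, hki, rfl⟩) ⟨δ₁, δ₂, hδ₁, hδ₂, rfl⟩

section coset

variable {i : ℕ} (hi : i < m)
include hi

lemma canonicalPerm_mul_simpleT_mem_canonicalCosets {δ₁ δ₂ j : ℕ} (hδ₁ : δ₁ ≤ i)
    (hδ₂ : i + δ₂ < m) (hj : j < m) (hji : j ≠ i) :
    canonicalPerm m i δ₁ δ₂ * simpleT m j ∈ canonicalCosets m i := by
  rcases (by omega : (j + 1 < i - δ₁ ∨ i + δ₂ + 1 < j) ∨ j + 1 = i - δ₁ ∨ j = i - δ₁ ∨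
      (i - δ₁ < j ∧ j < i) ∨ (i < j ∧ j < i + δ₂) ∨ j = i + δ₂ ∨ j = i + δ₂ + 1) with
    hfar | hext | hshr | ⟨h₁, h₂⟩ | ⟨h₁, h₂⟩ | hshr | hext
  · rw [canonicalPerm_mul_simpleT_of_far hi hδ₁ hδ₂ hj hfar]
    exact simpleT_mul_canonicalPerm_mem_canonicalCosets hδ₁ hδ₂ hj hji
  · rw [show j = i - 1 - δ₁ by omega, ← canonicalPerm_succ_left δ₂ (by omega)]
    exact canonicalPerm_mem_canonicalCosets (by omega) hδ₂
  · obtain ⟨δ, rfl⟩ : ∃ δ, δ₁ = δ + 1 := ⟨δ₁ - 1, by omega⟩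
    rw [show j = i - 1 - δ by omega, canonicalPerm_succ_left δ₂ (by omega), mul_assoc,
      simpleT_mul_self, mul_one]
    exact canonicalPerm_mem_canonicalCosets (by omega) hδ₂
  · rw [canonicalPerm_mul_simpleT_of_left hi hδ₁ hδ₂ h₁ h₂]
    exact simpleT_mul_canonicalPerm_mem_canonicalCosets hδ₁ hδ₂ (by omega) (by omega)
  · rw [canonicalPerm_mul_simpleT_of_right hi hδ₁ hδ₂ h₁ h₂]
    exact simpleT_mul_canonicalPerm_mem_canonicalCosets hδ₁ hδ₂ (by omega) (by omega)
  · obtain ⟨δ, rfl⟩ : ∃ δ, δ₂ = δ + 1 := ⟨δ₂ - 1, by omega⟩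
    rw [show j = i + 1 + δ by omega, canonicalPerm_succ_right, mul_assoc, simpleT_mul_self,
      mul_one]
    exact canonicalPerm_mem_canonicalCosets hδ₁ (by omega)
  · rw [show j = i + 1 + δ₂ by omega, ← canonicalPerm_succ_right]
    exact canonicalPerm_mem_canonicalCosets hδ₁ (by omega)

lemma mul_simpleT_mem_canonicalCosets {g : Perm (Fin (m + 1))}
    (hg : g ∈ canonicalCosets m i) {j : ℕ} (hj : j < m) (hji : j ≠ i) :
    g * simpleT m j ∈ canonicalCosets m i := by
  obtain ⟨h, hh, c, ⟨δ₁, δ₂, hδ₁, hδ₂, rfl⟩, rfl⟩ := Set.mem_mul.1 hg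
  obtain ⟨h', hh', c', hc', he⟩ :=
    Set.mem_mul.1 (canonicalPerm_mul_simpleT_mem_canonicalCosets hi hδ₁ hδ₂ hj hji)
  exact Set.mem_mul.2 ⟨h * h', mul_mem hh hh', c', hc', by rw [mul_assoc, he, mul_assoc]⟩

lemma mul_wordProd_mem_canonicalCosets {g : Perm (Fin (m + 1))}
    (hg : g ∈ canonicalCosets m i) {l : List ℕ} (hl : ∀ j ∈ l, j < m ∧ j ≠ i) :
    g * wordProd m l ∈ canonicalCosets m i := by
  induction l generalizing g with
  | nil => simpa [wordProd] using hg
  | cons j l ih =>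
    rw [wordProd_cons, ← mul_assoc]
    exact ih (mul_simpleT_mem_canonicalCosets hi hg (hl j (by simp)).1 (hl j (by simp)).2)
      fun k hk => hl k (List.mem_cons_of_mem _ hk)

end coset

end

/-- Let `w ∈ S_n` and `1 ≤ i ≤ n-1`, and suppose that some reduced word for `w`
contains the letter `s_i` exactly once.  Then there exists `w'` in the subgroup generated by
`{s_j : j ≠ i}` such that `w' w` equals one of the following multiplicity-free elements:
`s_i`; or `s_i s_{i-1} ⋯ s_{i-δ}` for some `δ ≥ 1`; or `s_i s_{i+1} ⋯ s_{i+δ}` for some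
`δ ≥ 1`; or `s_i s_{i-1} ⋯ s_{i-δ⁻} s_{i+1} ⋯ s_{i+δ⁺}` for some `δ⁻, δ⁺ ≥ 1` (all indices
lying in the allowed range).  (0-based formalization, with `i < m`.) -/
theorem statement10 {m : ℕ} (i : ℕ) (hi : i < m) (w : Equiv.Perm (Fin (m + 1)))
    (hmult : ∃ l : List ℕ, IsReducedWord m w l ∧ l.count i = 1) :
    ∃ w' ∈ Subgroup.closure (simplesAvoiding m i),
      (w' * w = simpleT m i) ∨
      (∃ δ : ℕ, 1 ≤ δ ∧ δ ≤ i ∧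
        w' * w = wordProd m (i :: (List.range δ).map (fun t => i - 1 - t))) ∨
      (∃ δ : ℕ, 1 ≤ δ ∧ i + δ < m ∧
        w' * w = wordProd m (i :: (List.range δ).map (fun t => i + 1 + t))) ∨
      (∃ δ₁ δ₂ : ℕ, 1 ≤ δ₁ ∧ 1 ≤ δ₂ ∧ δ₁ ≤ i ∧ i + δ₂ < m ∧
        w' * w = wordProd m
          (i :: ((List.range δ₁).map (fun t => i - 1 - t) ++
                 (List.range δ₂).map (fun t => i + 1 + t)))) := by
  obtain ⟨l, ⟨hl, rfl, -⟩, hcount⟩ := hmult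
  obtain ⟨a, b, rfl, ha, hb⟩ := exists_eq_append_cons_of_count_eq_one hcount
  have ha' : ∀ j ∈ a, j < m ∧ j ≠ i := fun j hj =>
    ⟨hl j (by simp [hj]), by rintro rfl; exact ha hj⟩
  have hb' : ∀ j ∈ b, j < m ∧ j ≠ i := fun j hj =>
    ⟨hl j (by simp [hj]), by rintro rfl; exact hb hj⟩
  have hsi : simpleT m i ∈ canonicalCosets m i :=
    canonicalPerm_zero_zero (m := m) i ▸ canonicalPerm_mem_canonicalCosets (Nat.zero_le i) hi
  obtain ⟨h, hh, c, ⟨δ₁, δ₂, hδ₁, hδ₂, rfl⟩, hc⟩ :=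
    Set.mem_mul.1 (mul_wordProd_mem_canonicalCosets hi hsi hb')
  refine ⟨(wordProd m a * h)⁻¹, inv_mem (mul_mem (wordProd_mem_closure ha') hh), ?_⟩
  have hw : (wordProd m a * h)⁻¹ * wordProd m (a ++ i :: b) = canonicalPerm m i δ₁ δ₂ := by
    rw [wordProd_append, wordProd_cons, ← hc]
    group
  rw [hw]
  exact canonicalPerm_eq_or hδ₁ hδ₂
end

section
/- Let S ⊆ {1,…,n−1} be nonempty, written S = {i_1 < i_2 < ⋯ < i_k}, and set i_0 := 0. For 1 ≤ j ≤ k−1, the image of the canonical map (∧^{n−i_{j+1}}F_{i_{j+1}}) ⊗ (∧^{i_{j+1}−i_j−1}F_{i_j}) ⊗ F_{i_{j−1}} → ∧^{n−i_j}D (given by wedging) has dimension 1 + (i_j − i_{j−1})(i_{j+1} − i_j). -/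
/-!
Choose a basis `e₀, …, e_{n-1}` adapted to the flag, so that `F_i` is spanned by `e_i, …, e_{n-1}`.
The monomials `e_T`, `T ⊆ {0, …, n-1}`, form a basis of the exterior algebra, and a product of
spans of monomials is spanned by the monomials `e_{S ∪ T}` with `S`, `T` disjoint. Writing
`a < b < c` for `i_{j-1} < i_j < i_{j+1}`, the image is therefore spanned by the `e_T` with
`T = [c, n) ∪ t ∪ {u}`, where `t ⊆ [b, c)` has `c - b - 1` elements and `u ∈ [a, n)` avoids the
rest. Such a `T` is either `[b, n)` itself or `[b, n)` with one element of `[b, c)` exchanged for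
one element of `[a, b)`: `1 + (c - b)(b - a)` sets in all.
-/

open Module Submodule ExteriorAlgebra FinsetFamily
open scoped Finset

namespace Finset

variable {α : Type*} [DecidableEq α] {A B C : Finset α}

lemma powersetCard_disjSups_powersetCard_one (J : Finset α) (m : ℕ) :
    J.powersetCard m ○ J.powersetCard 1 = J.powersetCard (m + 1) := by
  ext u
  simp only [mem_disjSups, mem_powersetCard, card_eq_one, sup_eq_union]
  constructor
  · rintro ⟨s, ⟨hsJ, hs⟩, _, ⟨hiJ, i, rfl⟩, hsi, rfl⟩
    exact ⟨union_subset hsJ hiJ, by rw [card_union_of_disjoint hsi, hs, card_singleton]⟩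
  · rintro ⟨huJ, hu⟩
    obtain ⟨i, hi⟩ := card_pos.mp (by omega : 0 < #u)
    refine ⟨u.erase i, ⟨(erase_subset i u).trans huJ, by rw [card_erase_of_mem hi, hu]; rfl⟩,
      {i}, ⟨singleton_subset_iff.mpr (huJ hi), i, rfl⟩,
      disjoint_singleton_right.mpr (notMem_erase i u), ?_⟩
    rw [union_comm, ← insert_eq, insert_erase hi]

lemma singleton_disjSups_powersetCard_card_sub_one (hCB : C ⊂ B) :
    {C} ○ B.powersetCard (#B - #C - 1) = (B \ C).image B.erase := by
  have hcard : #(B \ C) = #B - #C := card_sdiff_of_subset hCB.subset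
  ext T
  simp only [mem_disjSups, mem_singleton, exists_eq_left, mem_powersetCard, mem_image,
    sup_eq_union]
  constructor
  · rintro ⟨t, ⟨htB, ht⟩, hCt, rfl⟩
    have htBC : t ⊆ B \ C := subset_sdiff.mpr ⟨htB, hCt.symm⟩
    obtain ⟨x, hxt, hx⟩ := exists_eq_insert_iff.mpr ⟨htBC, by
      have := card_lt_card hCB; omega⟩
    refine ⟨x, hx ▸ mem_insert_self x t, ?_⟩
    ext y
    have := congrArg (y ∈ ·) hx
    grind
  · rintro ⟨x, hx, rfl⟩
    refine ⟨(B \ C).erase x, ⟨(erase_subset _ _).trans sdiff_subset, ?_⟩, ?_, ?_⟩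
    · rw [card_erase_of_mem hx, hcard]
    · exact disjoint_of_subset_right (erase_subset _ _) disjoint_sdiff
    · ext y
      grind

lemma image_erase_disjSups_powersetCard_one (hCB : C ⊂ B) (hBA : B ⊆ A) :
    (B \ C).image B.erase ○ A.powersetCard 1 =
      insert B (((B \ C) ×ˢ (A \ B)).image fun p => insert p.2 (B.erase p.1)) := by
  ext T
  simp only [mem_disjSups, mem_powersetCard, card_eq_one, mem_image, mem_insert, sup_eq_union,
    mem_product, Prod.exists]
  constructor
  · rintro ⟨_, ⟨x, hx, rfl⟩, _, ⟨huA, u, rfl⟩, hxu, rfl⟩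
    rw [disjoint_singleton_right] at hxu
    by_cases hux : u = x
    · left
      subst hux
      ext y
      grind
    · right
      refine ⟨x, u, ⟨hx, ?_⟩, ?_⟩ <;> grind
  · rintro (rfl | ⟨x, u, ⟨hx, hu⟩, rfl⟩)
    · obtain ⟨x, hx⟩ := sdiff_nonempty.mpr hCB.2
      exact ⟨_, ⟨x, hx, rfl⟩, {x}, ⟨by grind, x, rfl⟩, disjoint_singleton_right.mpr (by grind),
        by grind⟩
    · exact ⟨_, ⟨x, hx, rfl⟩, {u}, ⟨by grind, u, rfl⟩, disjoint_singleton_right.mpr (by grind),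
        by grind⟩

lemma card_insert_image_insert_erase :
    #(insert B (((B \ C) ×ˢ (A \ B)).image fun p => insert p.2 (B.erase p.1))) =
      1 + #(B \ C) * #(A \ B) := by
  rw [card_insert_of_notMem, card_image_of_injOn, card_product, add_comm]
  · rintro ⟨x, u⟩ hxu ⟨x', u'⟩ hxu' h
    simp only [coe_product, Set.mem_prod, mem_coe, mem_sdiff] at hxu hxu' h
    have hu := congrArg (u ∈ ·) h
    have hx := congrArg (x ∈ ·) h
    simp only [Prod.mk.injEq]
    grind
  · simp only [mem_image, mem_product, mem_sdiff, not_exists, not_and, Prod.forall]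
    intro x u hu h
    exact hu.2.2 (h ▸ mem_insert_self u _)

end Finset

namespace ExteriorAlgebra

section CommRing

variable {R M I : Type*} [CommRing R] [AddCommGroup M] [Module R M] [LinearOrder I]
  (b : Basis I R M)

lemma basis_empty : b.ExteriorAlgebra ∅ = 1 := by
  rw [basis_apply]
  exact ιMulti_zero_apply _

lemma basis_singleton (i : I) : b.ExteriorAlgebra {i} = ι R (b i) := by
  have hi : Set.powersetCard.ofFinEmbEquiv.symm
      (Set.powersetCard.ofCard (Finset.card_singleton i)) 0 = i :=
    Finset.mem_singleton.mp <| Set.powersetCard.mem_coe_iff.mpr <|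
      (Set.powersetCard.mem_range_ofFinEmbEquiv_symm_iff_mem
        (Set.powersetCard.ofCard (Finset.card_singleton i)) _).mp ⟨0, rfl⟩
  rw [basis_apply_ofCard b (Finset.card_singleton i), ιMulti_family, ιMulti_apply]
  simp [hi]

lemma basis_mul_basis_of_not_disjoint {s t : Finset I} (h : ¬Disjoint s t) :
    b.ExteriorAlgebra s * b.ExteriorAlgebra t = 0 :=
  basis_mul_of_not_disjoint b (Set.powersetCard.ofCard rfl) (Set.powersetCard.ofCard rfl) h

lemma basis_mul_basis_of_disjoint {s t : Finset I} (h : Disjoint s t) :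
    ∃ ε : ℤˣ, b.ExteriorAlgebra s * b.ExteriorAlgebra t = ε • b.ExteriorAlgebra (s ∪ t) :=
  ⟨_, (basis_mul_of_disjoint b (Set.powersetCard.ofCard rfl) (Set.powersetCard.ofCard rfl) h).trans
    (congrArg _ (congrArg _ (Finset.disjUnion_eq_union s t h)))⟩

lemma span_basis_mul_span_basis (𝒮 𝒯 : Finset (Finset I)) :
    span R (b.ExteriorAlgebra '' 𝒮) * span R (b.ExteriorAlgebra '' 𝒯) =
      span R (b.ExteriorAlgebra '' ↑(𝒮 ○ 𝒯)) := by
  rw [span_mul_span]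
  apply le_antisymm <;> rw [span_le]
  · rintro _ ⟨_, ⟨s, hs, rfl⟩, _, ⟨t, ht, rfl⟩, rfl⟩
    change b.ExteriorAlgebra s * b.ExteriorAlgebra t ∈ _
    by_cases hst : Disjoint s t
    · obtain ⟨ε, hε⟩ := basis_mul_basis_of_disjoint b hst
      rw [hε]
      exact smul_of_tower_mem _ ε <| subset_span
        ⟨s ∪ t, Finset.mem_disjSups.mpr ⟨s, hs, t, ht, hst, rfl⟩, rfl⟩
    · rw [basis_mul_basis_of_not_disjoint b hst]
      exact zero_mem _
  · rintro _ ⟨_, hu, rfl⟩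
    obtain ⟨s, hs, t, ht, hst, rfl⟩ := Finset.mem_disjSups.mp hu
    obtain ⟨ε, hε⟩ := basis_mul_basis_of_disjoint b hst
    have : b.ExteriorAlgebra (s ∪ t) = ε • (b.ExteriorAlgebra s * b.ExteriorAlgebra t) := by
      rw [hε, smul_smul, Int.units_mul_self, one_smul]
    rw [SetLike.mem_coe, Finset.sup_eq_union, this]
    exact smul_of_tower_mem _ ε <| subset_span (Set.mul_mem_mul ⟨s, hs, rfl⟩ ⟨t, ht, rfl⟩)

lemma map_ι_span_basis (J : Finset I) :
    (span R (b '' J)).map (ι R) = span R (b.ExteriorAlgebra '' ↑(J.powersetCard 1)) := by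
  rw [map_span, Set.image_image, Finset.powersetCard_one, Finset.coe_map, Set.image_image]
  simp only [Function.Embedding.coeFn_mk, basis_singleton]

lemma span_basis_powersetCard_one_pow (J : Finset I) (m : ℕ) :
    span R (b.ExteriorAlgebra '' ↑(J.powersetCard 1)) ^ m =
      span R (b.ExteriorAlgebra '' ↑(J.powersetCard m)) := by
  induction m with
  | zero => simp [basis_empty, one_eq_span]
  | succ m ih =>
    rw [pow_succ, ih, span_basis_mul_span_basis, Finset.powersetCard_disjSups_powersetCard_one]

end CommRing

section Field

variable {K V : Type*} [Field K] [AddCommGroup V] [Module K V]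

lemma _root_.Module.Basis.finrank_span_image {I : Type*} (b : Basis I K V) (𝒯 : Finset I) :
    finrank K (span K (b '' ↑𝒯)) = #𝒯 := by
  rw [Set.image_eq_range, ← Fintype.card_coe,
    ← finrank_span_eq_card (b.linearIndependent.comp _ Subtype.val_injective)]
  rfl

theorem finrank_map_ι_span_pow_mul_pow_mul {I : Type*} [LinearOrder I] (b : Basis I K V)
    {A B C : Finset I} (hCB : C ⊂ B) (hBA : B ⊆ A) :
    finrank K ↥((span K (b '' C)).map (ι K) ^ #C *
      (span K (b '' B)).map (ι K) ^ (#B - #C - 1) * (span K (b '' A)).map (ι K)) =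
      1 + #(B \ C) * #(A \ B) := by
  rw [map_ι_span_basis, map_ι_span_basis, map_ι_span_basis, span_basis_powersetCard_one_pow,
    span_basis_powersetCard_one_pow, span_basis_mul_span_basis, span_basis_mul_span_basis,
    Finset.powersetCard_self, Finset.singleton_disjSups_powersetCard_card_sub_one hCB,
    Finset.image_erase_disjSups_powersetCard_one hCB hBA, b.ExteriorAlgebra.finrank_span_image,
    Finset.card_insert_image_insert_erase]

theorem finrank_map_ι_span_Ici_pow_mul_pow_mul {n : ℕ} (e : Basis (Fin n) K V) {a b c : Fin n}
    (hab : a ≤ b) (hbc : b < c) :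
    finrank K ↥((span K (e '' ↑(Finset.Ici c))).map (ι K) ^ (n - c : ℕ) *
      (span K (e '' ↑(Finset.Ici b))).map (ι K) ^ (c - b - 1 : ℕ) *
      (span K (e '' ↑(Finset.Ici a))).map (ι K)) = 1 + (b - a : ℕ) * (c - b : ℕ) := by
  have hcb : #(Finset.Ici b \ Finset.Ici c) = c - b := by
    rw [Finset.card_sdiff_of_subset (Finset.Ici_subset_Ici.mpr hbc.le), Fin.card_Ici,
      Fin.card_Ici]
    omega
  have hba : #(Finset.Ici a \ Finset.Ici b) = b - a := by
    rw [Finset.card_sdiff_of_subset (Finset.Ici_subset_Ici.mpr hab), Fin.card_Ici, Fin.card_Ici]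
    omega
  have hexp : (c - b - 1 : ℕ) = #(Finset.Ici b) - #(Finset.Ici c) - 1 := by
    rw [Fin.card_Ici, Fin.card_Ici]
    omega
  rw [hexp, ← Fin.card_Ici c, finrank_map_ι_span_pow_mul_pow_mul e
    (Finset.Ici_ssubset_Ici.mpr hbc) (Finset.Ici_subset_Ici.mpr hab), hcb, hba, mul_comm]

end Field

end ExteriorAlgebra

section Flag

variable {K V : Type*} [Field K] [AddCommGroup V] [Module K V] [FiniteDimensional K V]

lemma Submodule.eq_span_singleton_sup_of_finrank_eq_succ {U W : Submodule K V} {v : V}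
    (hWU : W ≤ U) (hvU : v ∈ U) (hvW : v ∉ W) (hdim : finrank K U = finrank K W + 1) :
    U = K ∙ v ⊔ W := by
  have hlt : W < K ∙ v ⊔ W :=
    lt_of_le_of_ne le_sup_right fun h => hvW (h ▸ mem_sup_left (mem_span_singleton_self v))
  refine (eq_of_le_of_finrank_le (sup_le ((span_singleton_le_iff_mem v U).mpr hvU) hWU) ?_).symm
  have := finrank_lt_finrank_of_lt hlt
  omega

lemma exists_basis_span_Ici_eq_of_flag {n : ℕ} (hV : finrank K V = n) (F : ℕ → Submodule K V)
    (hF : ∀ j, F (j + 1) ≤ F j) (hdim : ∀ j ≤ n, finrank K (F j) = n - j) :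
    ∃ b : Basis (Fin n) K V, ∀ i : Fin n, F i = span K (b '' ↑(Finset.Ici i)) := by
  have hstep : ∀ j < n, ∃ v ∈ F j, v ∉ F (j + 1) := fun j hj =>
    SetLike.exists_of_lt <| lt_of_le_of_ne (hF j) fun h => by
      have h1 := hdim j hj.le
      have h2 := hdim (j + 1) hj
      rw [h] at h2
      omega
  choose! v hvF hvF' using hstep
  have hspan : ∀ j ≤ n, F j = span K ((fun i : Fin n => v i) '' {i : Fin n | j ≤ (i : ℕ)}) := by
    refine fun j hj => Nat.decreasingInduction (fun k hk ih => ?_) ?_ hj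
    · have hset : {i : Fin n | k ≤ (i : ℕ)} =
          insert (⟨k, hk⟩ : Fin n) {i : Fin n | k + 1 ≤ (i : ℕ)} := by
        ext i
        simp only [Set.mem_ofPred_eq, Set.mem_insert_iff, Fin.ext_iff]
        omega
      rw [hset, Set.image_insert_eq, span_insert, ← ih,
        ← eq_span_singleton_sup_of_finrank_eq_succ (hF k) (hvF k hk) (hvF' k hk)]
      rw [hdim k hk.le, hdim (k + 1) hk]
      omega
    · have hset : {i : Fin n | n ≤ (i : ℕ)} = ∅ := by
        ext i
        simp [i.isLt]
      rw [hset, Set.image_empty, span_empty, ← finrank_eq_zero, hdim n le_rfl, Nat.sub_self]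
  have htop : ⊤ ≤ span K (Set.range fun i : Fin n => v i) := by
    have h0 := hspan 0 n.zero_le
    simp only [Nat.zero_le, Set.ofPred_true, Set.image_univ] at h0
    rw [← h0, eq_top_of_finrank_eq ((hdim 0 n.zero_le).trans hV.symm)]
  refine ⟨basisOfTopLeSpanOfCardEqFinrank _ htop (by simp [hV]), fun i => ?_⟩
  have hIci : ((Finset.Ici i : Finset (Fin n)) : Set (Fin n)) = {i' : Fin n | (i : ℕ) ≤ i'} := by
    rw [Finset.coe_Ici]
    rfl
  rw [coe_basisOfTopLeSpanOfCardEqFinrank, hIci, hspan i i.isLt.le]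

end Flag

theorem statement17_general {E : Type*} [Field E] {D : Type*} [AddCommGroup D] [Module E D]
    {n : ℕ} [FiniteDimensional E D] (hD : Module.finrank E D = n)
    (F : ℕ → Submodule E D)
    (hflag : ∀ j : ℕ, F (j + 1) ≤ F j)
    (hdim : ∀ j : ℕ, j ≤ n → Module.finrank E (F j) = n - j)
    (k : ℕ) (idx : ℕ → ℕ)
    (hmono : ∀ t : ℕ, t < k → idx t < idx (t + 1))
    (hrange : ∀ t : ℕ, 1 ≤ t → t ≤ k → 1 ≤ idx t ∧ idx t ≤ n - 1)
    (j : ℕ) (hj1 : 1 ≤ j) (hjk : j ≤ k - 1) :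
    Module.finrank E
      ↥((Submodule.map (ExteriorAlgebra.ι E) (F (idx (j + 1)))) ^ (n - idx (j + 1)) *
        (Submodule.map (ExteriorAlgebra.ι E) (F (idx j))) ^ (idx (j + 1) - idx j - 1) *
        (Submodule.map (ExteriorAlgebra.ι E) (F (idx (j - 1))))) =
      1 + (idx j - idx (j - 1)) * (idx (j + 1) - idx j) := by
  have hab : idx (j - 1) < idx j := by
    simpa only [Nat.sub_add_cancel hj1] using hmono (j - 1) (by omega)
  have hbc : idx j < idx (j + 1) := hmono j (by omega)
  have hcn : idx (j + 1) < n := by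
    have := hrange (j + 1) (by omega) (by omega)
    omega
  obtain ⟨e, he⟩ := exists_basis_span_Ici_eq_of_flag hD F hflag hdim
  rw [he ⟨idx (j + 1), hcn⟩, he ⟨idx j, by omega⟩, he ⟨idx (j - 1), by omega⟩]
  exact finrank_map_ι_span_Ici_pow_mul_pow_mul e (a := ⟨idx (j - 1), _⟩) (b := ⟨idx j, _⟩)
    (c := ⟨idx (j + 1), hcn⟩) hab.le hbc

/-- Let `D = F_0 ⊋ F_1 ⊋ ⋯ ⊋ F_{n-1} ⊋ F_n = 0` be a complete flag on the
`n`-dimensional `E`-vector space `D` (so `dim F_j = n - j`).  Let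
`S = {i_1 < i_2 < ⋯ < i_k} ⊆ {1, …, n-1}` be nonempty and set `i_0 := 0`.  For
`1 ≤ j ≤ k-1`, the image of the canonical map
`(⋀^{n-i_{j+1}} F_{i_{j+1}}) ⊗ (⋀^{i_{j+1}-i_j-1} F_{i_j}) ⊗ F_{i_{j-1}} → ⋀^{n-i_j} D`
(given by wedging) has dimension `1 + (i_j - i_{j-1})(i_{j+1} - i_j)`.

The subset `S` is encoded by its strictly increasing enumeration `idx : ℕ → ℕ` with
`idx 0 = 0` and `idx t ∈ {1, …, n-1}` for `1 ≤ t ≤ k`; exterior powers of a subspace `F` are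
realized inside the exterior algebra of `D` as powers of the submodule `ι(F)`, and the image
of the canonical map as a product of submodules. -/
theorem statement17 {E : Type*} [Field E] {D : Type*} [AddCommGroup D] [Module E D]
    {n : ℕ} [FiniteDimensional E D] (hD : Module.finrank E D = n)
    (F : ℕ → Submodule E D)
    (hflag : ∀ j : ℕ, F (j + 1) ≤ F j)
    (hdim : ∀ j : ℕ, j ≤ n → Module.finrank E (F j) = n - j)
    (k : ℕ) (hk : 1 ≤ k) (idx : ℕ → ℕ)
    (h0 : idx 0 = 0)
    (hmono : ∀ t : ℕ, t < k → idx t < idx (t + 1))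
    (hrange : ∀ t : ℕ, 1 ≤ t → t ≤ k → 1 ≤ idx t ∧ idx t ≤ n - 1)
    (j : ℕ) (hj1 : 1 ≤ j) (hjk : j ≤ k - 1) :
    Module.finrank E
      ↥((Submodule.map (ExteriorAlgebra.ι E) (F (idx (j + 1)))) ^ (n - idx (j + 1)) *
        (Submodule.map (ExteriorAlgebra.ι E) (F (idx j))) ^ (idx (j + 1) - idx j - 1) *
        (Submodule.map (ExteriorAlgebra.ι E) (F (idx (j - 1))))) =
      1 + (idx j - idx (j - 1)) * (idx (j + 1) - idx j) :=
  statement17_general hD F hflag hdim k idx hmono hrange j hj1 hjk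
end
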